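/- Let A and C be prevarieties such that A is C-based, and let C' be a prevariety with C ⊆ C' (so A is also C'-based). Then: (i) if U_{A,C} satisfies (S) then U_{A,C'} satisfies (S); (ii) if U_{A,C'} satisfies (E) then U_{A,C} satisfies (E). -/
import Mathlib


open FirstOrder FirstOrder.Language FirstOrder.Language.Structure

namespace CoproductsPaper

/-- Pointwise structure on a product of `L`-structures. -/
instance piStructure {L : FirstOrder.Language.{0,0}} {ι : Type} (M : ι → Type)
    [∀ i, L.Structure (M i)] : L.Structure (∀ i, M i) where
  funMap f x i := funMap f fun j => x j i
  RelMap r x := ∀ i, RelMap r fun j => x j i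

/-- A class of `L`-structures. -/
abbrev ClassOf (L : FirstOrder.Language.{0,0}) : Type 1 :=
  (X : Type) → L.Structure X → Prop

variable {L L' : FirstOrder.Language.{0,0}}

/-- A homomorphism of algebras (structures for an algebraic language), with the
structures given explicitly. -/
def IsAlgHomOn {X Y : Type} (iX : L.Structure X) (iY : L.Structure Y)
    (f : X → Y) : Prop :=
  ∀ {n : ℕ} (g : L.Functions n) (v : Fin n → X),
    f (@funMap L X iX n g v) = @funMap L Y iY n g (f ∘ v)

/-- An interpretation of the language `L'` (thought of as a set `T` of `L`-terms,
regarded as a language) inside the language `L`: each `n`-ary function symbol of `L'`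
is interpreted by an `L`-term in `n` variables. -/
structure TermTranslation (L L' : FirstOrder.Language.{0,0}) : Type where
  onFun : ∀ {n : ℕ}, L'.Functions n → L.Term (Fin n)

/-- The `T`-term-reduct of an `L`-structure `X`, an `L'`-structure on `X`. -/
def reduct [L'.IsAlgebraic] (T : TermTranslation L L') (X : Type)
    (iX : L.Structure X) : L'.Structure X where
  funMap {n} f v := @FirstOrder.Language.Term.realize L X iX (Fin n) v (T.onFun f)
  RelMap {n} r _ := isEmptyElim r

/-- `Acl` is `C`-based via the term translation `T`: the `T`-reduct of every member of
`Acl` belongs to `Ccl`. -/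
def CBased [L'.IsAlgebraic] (T : TermTranslation L L') (Acl : ClassOf L)
    (Ccl : ClassOf L') : Prop :=
  ∀ (X : Type) (iX : L.Structure X), Acl X iX → Ccl X (reduct T X iX)

/-- `(C, ε)` is a coproduct co-cone for the family `K` within the class `Acl`
(unbundled form). -/
def IsCoprodB (Acl : ClassOf L) {κ : Type} (K : κ → Type) (iK : ∀ k, L.Structure (K k))
    (C : Type) (iC : L.Structure C) (ε : ∀ k, K k → C) : Prop :=
  Acl C iC ∧ (∀ k, IsAlgHomOn (iK k) iC (ε k)) ∧
  ∀ (B : Type) (iB : L.Structure B), Acl B iB → ∀ f : ∀ k, K k → B,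
    (∀ k, IsAlgHomOn (iK k) iB (f k)) →
      ∃! h : C → B, IsAlgHomOn iC iB h ∧ ∀ k, h ∘ ε k = f k

/-- `F` is free over the class `Acl` on the generators `gen : G → F`. -/
def IsFreeOverB (Acl : ClassOf L) (G : Type) (F : Type) (iF : L.Structure F)
    (gen : G → F) : Prop :=
  Acl F iF ∧ ∀ (B : Type) (iB : L.Structure B), Acl B iB → ∀ v : G → B,
    ∃! h : F → B, IsAlgHomOn iF iB h ∧ ∀ x : G, h (gen x) = v x

/-- The class `Acl` is closed under isomorphic copies. -/
def ClosedUnderI (Acl : ClassOf L) : Prop :=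
  ∀ (X : Type) (iX : L.Structure X) (Y : Type) (iY : L.Structure Y), Acl X iX →
    ∀ e : X → Y, IsAlgHomOn iX iY e → Function.Bijective e → Acl Y iY

/-- The class `Acl` is closed under subalgebras (realised as injective
homomorphisms). -/
def ClosedUnderS (Acl : ClassOf L) : Prop :=
  ∀ (X : Type) (iX : L.Structure X), Acl X iX →
    ∀ (Y : Type) (iY : L.Structure Y) (e : Y → X),
      IsAlgHomOn iY iX e → Function.Injective e → Acl Y iY

/-- The class `Acl` is closed under (arbitrary) products. -/
def ClosedUnderP (Acl : ClassOf L) : Prop :=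
  ∀ (κ : Type) (Mfam : κ → Type) (iM : ∀ k, L.Structure (Mfam k)),
    (∀ k, Acl (Mfam k) (iM k)) →
      Acl (∀ k, Mfam k) (@piStructure L κ Mfam iM)

/-- `Acl` is a prevariety: a class of algebras closed under `I`, `S` and `P`. -/
def IsPrevariety (Acl : ClassOf L) : Prop :=
  ClosedUnderI Acl ∧ ClosedUnderS Acl ∧ ClosedUnderP Acl

/-- The functor `U_{A,C}` satisfies (S): for every set `K` of algebras in `Acl`, the
canonical comparison `C`-homomorphism `χ_K : ∐_C U(K) → U(∐_A K)` (characterised by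
commuting with the coproduct injections) is surjective. -/
def SatisfiesSB [L'.IsAlgebraic] (T : TermTranslation L L') (Acl : ClassOf L)
    (Ccl : ClassOf L') : Prop :=
  ∀ (κ : Type) (K : κ → Type) (iK : ∀ k, L.Structure (K k)),
    (∀ k, Acl (K k) (iK k)) →
    ∀ (C : Type) (iC : L.Structure C) (ε : ∀ k, K k → C),
      IsCoprodB Acl K iK C iC ε →
    ∀ (P : Type) (iP : L'.Structure P) (η : ∀ k, K k → P),
      IsCoprodB Ccl K (fun k => reduct T (K k) (iK k)) P iP η →
    ∀ χ : P → C, IsAlgHomOn iP (reduct T C iC) χ → (∀ k, χ ∘ η k = ε k) →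
      Function.Surjective χ

/-- The functor `U_{A,C}` satisfies (E): every canonical comparison homomorphism
`χ_K` is injective. -/
def SatisfiesEB [L'.IsAlgebraic] (T : TermTranslation L L') (Acl : ClassOf L)
    (Ccl : ClassOf L') : Prop :=
  ∀ (κ : Type) (K : κ → Type) (iK : ∀ k, L.Structure (K k)),
    (∀ k, Acl (K k) (iK k)) →
    ∀ (C : Type) (iC : L.Structure C) (ε : ∀ k, K k → C),
      IsCoprodB Acl K iK C iC ε →
    ∀ (P : Type) (iP : L'.Structure P) (η : ∀ k, K k → P),
      IsCoprodB Ccl K (fun k => reduct T (K k) (iK k)) P iP η →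
    ∀ χ : P → C, IsAlgHomOn iP (reduct T C iC) χ → (∀ k, χ ∘ η k = ε k) →
      Function.Injective χ


section Helpers

variable {N : FirstOrder.Language.{0,0}}

theorem homOn_comp {X Y Z : Type} {iX : N.Structure X} {iY : N.Structure Y}
    {iZ : N.Structure Z} {f : X → Y} {g : Y → Z}
    (hf : IsAlgHomOn iX iY f) (hg : IsAlgHomOn iY iZ g) :
    IsAlgHomOn iX iZ (g ∘ f) := by
  intro n o v
  show g (f (funMap o v)) = _
  rw [hf, hg]
  rfl

theorem hom_realize {X Y : Type} (iX : N.Structure X) (iY : N.Structure Y) {f : X → Y}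
    (hf : IsAlgHomOn iX iY f) {α : Type} (v : α → X) :
    ∀ t : N.Term α, f (@Term.realize N X iX α v t) = @Term.realize N Y iY α (f ∘ v) t
  | .var a => rfl
  | .func o ts => by
    show f (@funMap N X iX _ o fun j => @Term.realize N X iX α v (ts j)) =
      @funMap N Y iY _ o fun j => @Term.realize N Y iY α (f ∘ v) (ts j)
    rw [hf o]
    congr 1
    funext j
    exact hom_realize iX iY hf v (ts j)

theorem reduct_hom [L'.IsAlgebraic] (T : TermTranslation L L') {X Y : Type}
    (iX : L.Structure X) (iY : L.Structure Y) {f : X → Y}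
    (hf : IsAlgHomOn iX iY f) :
    IsAlgHomOn (reduct T X iX) (reduct T Y iY) f := by
  intro n o v
  exact hom_realize iX iY hf v (T.onFun o)

/-- The free term structure on `N.Term α`. -/
def termStruct [N.IsAlgebraic] (α : Type) : N.Structure (N.Term α) where
  funMap o v := Term.func o v
  RelMap r _ := isEmptyElim r

theorem termStruct_realize_hom [N.IsAlgebraic] {α X : Type} (iX : N.Structure X)
    (v : α → X) : IsAlgHomOn (termStruct α) iX (fun t => @Term.realize N X iX α v t) := by
  intro n o ts
  rfl

/-- Structure on a subset closed under operations. -/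
def subStruct [N.IsAlgebraic] {X : Type} (iX : N.Structure X) (S : Set X)
    (hcl : ∀ {n : ℕ} (o : N.Functions n) (v : Fin n → X),
      (∀ j, v j ∈ S) → @funMap N X iX n o v ∈ S) : N.Structure S where
  funMap o v := ⟨@funMap N X iX _ o fun j => (v j).1, hcl o _ fun j => (v j).2⟩
  RelMap r _ := isEmptyElim r

theorem subStruct_val_hom [N.IsAlgebraic] {X : Type} (iX : N.Structure X) (S : Set X)
    (hcl : ∀ {n : ℕ} (o : N.Functions n) (v : Fin n → X),
      (∀ j, v j ∈ S) → @funMap N X iX n o v ∈ S) :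
    IsAlgHomOn (subStruct iX S hcl) iX (Subtype.val) := by
  intro n o v
  rfl

end Helpers

section RangeSub

variable {N : FirstOrder.Language.{0,0}} [N.IsAlgebraic]

theorem rangeClosed {A B : Type} (iA : N.Structure A) (iB : N.Structure B) {f : A → B}
    (hf : IsAlgHomOn iA iB f) {n : ℕ} (o : N.Functions n) (v : Fin n → B)
    (hv : ∀ j, v j ∈ Set.range f) : @funMap N B iB n o v ∈ Set.range f := by
  choose a ha using hv
  refine ⟨@funMap N A iA n o a, ?_⟩
  rw [hf]
  congr 1
  funext j
  exact ha j

/-- Structure on the range of a homomorphism. -/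
noncomputable def rangeStruct {A B : Type} (iA : N.Structure A) (iB : N.Structure B)
    {f : A → B} (hf : IsAlgHomOn iA iB f) : N.Structure (Set.range f) :=
  subStruct iB (Set.range f) (fun o v hv => rangeClosed iA iB hf o v hv)

theorem rangeStruct_val_hom {A B : Type} (iA : N.Structure A) (iB : N.Structure B)
    {f : A → B} (hf : IsAlgHomOn iA iB f) :
    IsAlgHomOn (rangeStruct iA iB hf) iB (Subtype.val) := fun o v => rfl

/-- If `(P, η)` is a `Dcl`-coproduct and `φ : Q → P` is a homomorphism whose range
contains every `η k x`, then `φ` is surjective. -/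
theorem coprod_surj {Dcl : ClassOf N} (hS : ClosedUnderS Dcl)
    {κ : Type} {K : κ → Type} {jK : ∀ k, N.Structure (K k)}
    {P : Type} {iP : N.Structure P} {η : ∀ k, K k → P}
    (hcop : IsCoprodB Dcl K jK P iP η)
    {Q : Type} {iQ : N.Structure Q} {φ : Q → P} (hφ : IsAlgHomOn iQ iP φ)
    (hr : ∀ k x, η k x ∈ Set.range φ) : Function.Surjective φ := by
  obtain ⟨hPD, hηhom, huniv⟩ := hcop
  set iR := rangeStruct iQ iP hφ with hiR
  have hvalhom : IsAlgHomOn iR iP (Subtype.val) := rangeStruct_val_hom iQ iP hφ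
  have hRD : Dcl (Set.range φ) iR :=
    hS P iP hPD _ iR Subtype.val hvalhom Subtype.val_injective
  -- cocone into the range
  have hrhom : ∀ k, IsAlgHomOn (jK k) iR (fun x => (⟨η k x, hr k x⟩ : Set.range φ)) := by
    intro k n o v
    apply Subtype.ext
    exact hηhom k o v
  obtain ⟨h, ⟨hhhom, hhcomm⟩, -⟩ := huniv (Set.range φ) iR hRD
    (fun k x => ⟨η k x, hr k x⟩) hrhom
  -- val ∘ h = id by uniqueness
  obtain ⟨u, -, huniq⟩ := huniv P iP hPD η hηhom
  have h1 : Subtype.val ∘ h = u := huniq _ ⟨homOn_comp hhhom hvalhom, by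
    intro k
    rw [Function.comp_assoc, hhcomm k]
    rfl⟩
  have h2 : id = u := huniq _ ⟨fun o v => rfl, fun k => rfl⟩
  have : Subtype.val ∘ h = id := h1.trans h2.symm
  intro p
  have hp : (h p).1 = p := congrFun this p
  obtain ⟨q, hq⟩ := (h p).2
  exact ⟨q, hq.trans hp⟩

end RangeSub

section CoprodExists

variable {N : FirstOrder.Language.{0,0}} [N.IsAlgebraic]
variable {κ : Type} (K : κ → Type) (jK : ∀ k, N.Structure (K k)) (Dcl : ClassOf N)

/-- The index type for the product used in the coproduct construction. -/
def CIdx : Type :=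
  Σ s : Setoid (N.Term ((k : κ) × K k)), {d : N.Structure (Quotient s) × (∀ k, K k → Quotient s) //
    Dcl (Quotient s) d.1 ∧ (∀ k, IsAlgHomOn (jK k) d.1 (d.2 k)) ∧
    ∀ t : N.Term ((k : κ) × K k), Quotient.mk s t =
      @Term.realize N (Quotient s) d.1 _ (fun v => d.2 v.1 v.2) t}

def cIdxStr (i : CIdx K jK Dcl) : N.Structure (Quotient i.1) := i.2.1.1

def cProd : Type := ∀ i : CIdx K jK Dcl, Quotient i.1

noncomputable def cProdStr : N.Structure (cProd K jK Dcl) :=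
  @piStructure N (CIdx K jK Dcl) (fun i => Quotient i.1) (fun i => cIdxStr K jK Dcl i)

/-- Evaluation of terms in every index, i.e. the canonical map `W → ∏`. -/
noncomputable def cE (t : N.Term ((k : κ) × K k)) : cProd K jK Dcl :=
  fun i => @Term.realize N (Quotient i.1) (cIdxStr K jK Dcl i) _
    (fun v => i.2.1.2 v.1 v.2) t

theorem cE_hom : IsAlgHomOn (termStruct ((k : κ) × K k)) (cProdStr K jK Dcl)
    (cE K jK Dcl) := by
  intro n o v
  funext i
  rfl

theorem cE_mk (t : N.Term ((k : κ) × K k)) (i : CIdx K jK Dcl) : cE K jK Dcl t i = Quotient.mk i.1 t :=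
  (i.2.2.2.2 t).symm

/-- Carrier of the coproduct: the range of `cE`. -/
noncomputable def cP : Type := Set.range (cE K jK Dcl)

noncomputable def cPStr : N.Structure (cP K jK Dcl) :=
  rangeStruct (termStruct _) (cProdStr K jK Dcl) (cE_hom K jK Dcl)

noncomputable def cEta (k : κ) (x : K k) : cP K jK Dcl :=
  ⟨cE K jK Dcl (Term.var ⟨k, x⟩), ⟨_, rfl⟩⟩

theorem cEta_hom (k : κ) : IsAlgHomOn (jK k) (cPStr K jK Dcl) (cEta K jK Dcl k) := by
  intro n o v
  apply Subtype.ext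
  show cE K jK Dcl (Term.var ⟨k, @funMap N (K k) (jK k) n o v⟩)
    = @funMap N (cProd K jK Dcl) (cProdStr K jK Dcl) n o
        (fun j => cE K jK Dcl (Term.var ⟨k, v j⟩))
  funext i
  show i.2.1.2 k (@funMap N (K k) (jK k) n o v)
    = @funMap N (Quotient i.1) (cIdxStr K jK Dcl i) n o (fun j => i.2.1.2 k (v j))
  exact i.2.2.2.1 k o v

theorem cP_mem (hS : ClosedUnderS Dcl) (hP : ClosedUnderP Dcl) :
    Dcl (cP K jK Dcl) (cPStr K jK Dcl) := by
  have hprod : Dcl (cProd K jK Dcl) (cProdStr K jK Dcl) :=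
    hP (CIdx K jK Dcl) (fun i => Quotient i.1) (fun i => cIdxStr K jK Dcl i)
      (fun i => i.2.2.1)
  exact hS _ (cProdStr K jK Dcl) hprod _ (cPStr K jK Dcl) Subtype.val
    (rangeStruct_val_hom _ _ _) Subtype.val_injective


variable {B : Type} (iB : N.Structure B) (f : ∀ k, K k → B)

/-- Evaluation of terms in a co-cone `f`. -/
noncomputable def cEv (t : N.Term ((k : κ) × K k)) : B :=
  @Term.realize N B iB _ (fun v => f v.1 v.2) t

theorem cEv_hom : IsAlgHomOn (termStruct ((k : κ) × K k)) iB (cEv K iB f) :=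
  fun o ts => rfl

/-- The kernel of evaluation, as a setoid. -/
def cKer : Setoid (N.Term ((k : κ) × K k)) :=
  ⟨fun a b => cEv K iB f a = cEv K iB f b, ⟨fun _ => rfl, Eq.symm, Eq.trans⟩⟩

/-- Structure on the quotient by the kernel of evaluation. -/
noncomputable def cQStr : N.Structure (Quotient (cKer K iB f)) where
  funMap o v := Quotient.mk (cKer K iB f) (Term.func o fun j => (v j).out)
  RelMap r _ := isEmptyElim r

theorem cEv_out (x : N.Term ((k : κ) × K k)) :
    cEv K iB f (Quotient.out (Quotient.mk (cKer K iB f) x)) = cEv K iB f x :=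
  Quotient.exact (Quotient.out_eq (Quotient.mk (cKer K iB f) x))

theorem cmk_hom {n : ℕ} (o : N.Functions n) (ts : Fin n → N.Term ((k : κ) × K k)) :
    Quotient.mk (cKer K iB f) (Term.func o ts) =
      @funMap N _ (cQStr K iB f) n o (fun j => Quotient.mk (cKer K iB f) (ts j)) := by
  apply Quotient.sound
  show cEv K iB f (Term.func o ts) = cEv K iB f (Term.func o _)
  show @funMap N B iB n o (fun j => cEv K iB f (ts j)) = @funMap N B iB n o _
  congr 1
  funext j
  exact (cEv_out K iB f (ts j)).symm

noncomputable def cLift : Quotient (cKer K iB f) → B :=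
  Quotient.lift (cEv K iB f) (fun _ _ h => h)

theorem cLift_hom : IsAlgHomOn (cQStr K iB f) iB (cLift K iB f) := by
  intro n o v
  show cEv K iB f (Term.func o fun j => (v j).out) = _
  show @funMap N B iB n o (fun j => cEv K iB f ((v j).out)) = _
  congr 1
  funext j
  show cEv K iB f ((v j).out) = cLift K iB f (v j)
  conv_rhs => rw [← Quotient.out_eq (v j)]
  rfl

theorem cLift_inj : Function.Injective (cLift K iB f) := by
  intro a b
  induction a using Quotient.ind
  induction b using Quotient.ind
  exact fun h => Quotient.sound h

/-- The co-cone into the quotient. -/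
def cQEta (k : κ) (x : K k) : Quotient (cKer K iB f) :=
  Quotient.mk (cKer K iB f) (Term.var ⟨k, x⟩)

theorem cQEta_hom (hf : ∀ k, IsAlgHomOn (jK k) iB (f k)) (k : κ) :
    IsAlgHomOn (jK k) (cQStr K iB f) (cQEta K iB f k) := by
  intro n o v
  show cQEta K iB f k (@funMap N (K k) (jK k) n o v) =
    @funMap N _ (cQStr K iB f) n o fun j => Quotient.mk (cKer K iB f) (Term.var ⟨k, v j⟩)
  rw [← cmk_hom]
  apply Quotient.sound
  show f k (@funMap N (K k) (jK k) n o v) =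
    @funMap N B iB n o (fun j => f k (v j))
  exact hf k o v

theorem cQ_realize (t : N.Term ((k : κ) × K k)) :
    Quotient.mk (cKer K iB f) t =
      @Term.realize N _ (cQStr K iB f) _ (fun v => cQEta K iB f v.1 v.2) t := by
  induction t with
  | var v => rfl
  | @func n o ts ih =>
      show _ = @funMap N _ (cQStr K iB f) _ o
        (fun j => @Term.realize N _ (cQStr K iB f) _ (fun v => cQEta K iB f v.1 v.2) (ts j))
      rw [cmk_hom]
      congr 1
      funext j
      exact ih j

/-- The index corresponding to a co-cone `(B, f)`. -/
noncomputable def cI0 (hS : ClosedUnderS Dcl) (hB : Dcl B iB)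
    (hf : ∀ k, IsAlgHomOn (jK k) iB (f k)) : CIdx K jK Dcl :=
  ⟨cKer K iB f, ⟨(cQStr K iB f, cQEta K iB f),
    hS B iB hB _ (cQStr K iB f) (cLift K iB f) (cLift_hom K iB f) (cLift_inj K iB f),
    cQEta_hom K jK iB f hf, cQ_realize K iB f⟩⟩

theorem cE_ev (hS : ClosedUnderS Dcl) (hB : Dcl B iB)
    (hf : ∀ k, IsAlgHomOn (jK k) iB (f k))
    {t₁ t₂ : N.Term ((k : κ) × K k)} (h : cE K jK Dcl t₁ = cE K jK Dcl t₂) :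
    cEv K iB f t₁ = cEv K iB f t₂ := by
  have := congrFun h (cI0 K jK Dcl iB f hS hB hf)
  rw [cE_mk, cE_mk] at this
  exact Quotient.exact this


theorem coprodExists (hS : ClosedUnderS Dcl) (hPcl : ClosedUnderP Dcl) :
    ∃ (P : Type) (iP : N.Structure P) (η : ∀ k, K k → P),
      IsCoprodB Dcl K jK P iP η := by
  classical
  refine ⟨cP K jK Dcl, cPStr K jK Dcl, cEta K jK Dcl,
    cP_mem K jK Dcl hS hPcl, cEta_hom K jK Dcl, ?_⟩
  intro B iB hB f hf
  set h : cP K jK Dcl → B := fun p => cEv K iB f (Classical.choose p.2) with hh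
  have hkey : ∀ (p : cP K jK Dcl) (t : N.Term ((k : κ) × K k)),
      p.1 = cE K jK Dcl t → h p = cEv K iB f t := by
    intro p t ht
    exact cE_ev K jK Dcl iB f hS hB hf ((Classical.choose_spec p.2).trans ht)
  have hhom : IsAlgHomOn (cPStr K jK Dcl) iB h := by
    intro n o v
    set ts : Fin n → N.Term ((k : κ) × K k) := fun j => Classical.choose (v j).2 with hts
    have hv : ∀ j, cE K jK Dcl (ts j) = (v j).1 := fun j => Classical.choose_spec (v j).2
    have h1 : (@funMap N _ (cPStr K jK Dcl) n o v).1 = cE K jK Dcl (Term.func o ts) := by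
      show @funMap N _ (cProdStr K jK Dcl) n o (fun j => (v j).1) = _
      rw [show cE K jK Dcl (Term.func o ts)
          = @funMap N _ (cProdStr K jK Dcl) n o (cE K jK Dcl ∘ ts)
        from cE_hom K jK Dcl o ts]
      congr 1
      funext j
      exact (hv j).symm
    rw [hkey _ _ h1]
    have hcv : h ∘ v = fun j => cEv K iB f (ts j) :=
      funext fun j => hkey (v j) (ts j) (hv j).symm
    show @funMap N B iB n o (fun j => cEv K iB f (ts j)) = @funMap N B iB n o (h ∘ v)
    rw [hcv]
  have hcomm : ∀ k, h ∘ cEta K jK Dcl k = f k := by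
    intro k
    funext x
    exact hkey (cEta K jK Dcl k x) (Term.var ⟨k, x⟩) rfl
  refine ⟨h, ⟨hhom, hcomm⟩, ?_⟩
  intro h' ⟨h'hom, h'comm⟩
  have claim : ∀ (t : N.Term ((k : κ) × K k)) (hm : cE K jK Dcl t ∈ Set.range (cE K jK Dcl)),
      h' ⟨cE K jK Dcl t, hm⟩ = cEv K iB f t := by
    intro t
    induction t with
    | var v =>
        intro hm
        have : (⟨cE K jK Dcl (Term.var v), hm⟩ : cP K jK Dcl) = cEta K jK Dcl v.1 v.2 :=
          Subtype.ext rfl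
        rw [this]
        exact congrFun (h'comm v.1) v.2
    | @func n o ts ih =>
        intro hm
        set vv : Fin n → cP K jK Dcl := fun j => ⟨cE K jK Dcl (ts j), ⟨_, rfl⟩⟩ with hvv
        have h2 : (⟨cE K jK Dcl (Term.func o ts), hm⟩ : cP K jK Dcl)
            = @funMap N _ (cPStr K jK Dcl) n o vv := by
          apply Subtype.ext
          exact cE_hom K jK Dcl o ts
        rw [h2, h'hom o vv]
        show @funMap N B iB n o (fun j => h' (vv j)) = @funMap N B iB n o
          (fun j => cEv K iB f (ts j))
        congr 1
        funext j
        exact ih j _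
  funext p
  obtain ⟨p, hp⟩ := p
  obtain ⟨t, ht⟩ := hp
  subst ht
  exact (claim t ⟨t, rfl⟩).trans (hkey _ t rfl).symm

end CoprodExists







/-- Let `A` and `C` be prevarieties such that `A` is `C`-based, and let `C'` be a
prevariety with `C ⊆ C'` (so `A` is also `C'`-based).  Then:
(i) if `U_{A,C}` satisfies (S) then `U_{A,C'}` satisfies (S);
(ii) if `U_{A,C'}` satisfies (E) then `U_{A,C}` satisfies (E). -/
theorem satisfiesS_up_satisfiesE_down
    (L L' : FirstOrder.Language.{0,0}) [L.IsAlgebraic] [L'.IsAlgebraic]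
    (T : TermTranslation L L')
    (Acl : ClassOf L) (Ccl Ccl' : ClassOf L')
    (hA : IsPrevariety Acl) (hC : IsPrevariety Ccl) (hC' : IsPrevariety Ccl')
    (hsub : ∀ (X : Type) (iX : L'.Structure X), Ccl X iX → Ccl' X iX)
    (hBased : CBased T Acl Ccl) :
    (SatisfiesSB T Acl Ccl → SatisfiesSB T Acl Ccl') ∧
    (SatisfiesEB T Acl Ccl' → SatisfiesEB T Acl Ccl) := by
  constructor
  · intro hSsat κ K iK hK C iC ε hCop P' iP' η' hP'cop χ' hχ'hom hχ'comm
    obtain ⟨P, iP, η, hPcop⟩ :=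
      coprodExists K (fun k => reduct T (K k) (iK k)) Ccl hC.2.1 hC.2.2
    obtain ⟨φ, ⟨hφhom, hφcomm⟩, -⟩ := hP'cop.2.2 P iP (hsub _ _ hPcop.1) η hPcop.2.1
    have hCred : Ccl C (reduct T C iC) := hBased _ _ hCop.1
    have hεred : ∀ k, IsAlgHomOn (reduct T (K k) (iK k)) (reduct T C iC) (ε k) :=
      fun k => reduct_hom T (iK k) iC (hCop.2.1 k)
    obtain ⟨χ, ⟨hχhom, hχcomm⟩, -⟩ := hPcop.2.2 C (reduct T C iC) hCred ε hεred
    have hχsurj : Function.Surjective χ :=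
      hSsat κ K iK hK C iC ε hCop P iP η hPcop χ hχhom hχcomm
    have hφsurj : Function.Surjective φ :=
      coprod_surj hC.2.1 hPcop hφhom (fun k x => ⟨η' k x, congrFun (hφcomm k) x⟩)
    obtain ⟨u, -, huniq⟩ := hP'cop.2.2 C (reduct T C iC) (hsub _ _ hCred) ε hεred
    have e1 : χ' = u := huniq _ ⟨hχ'hom, hχ'comm⟩
    have e2 : χ ∘ φ = u := huniq _ ⟨homOn_comp hφhom hχhom,
      fun k => by rw [Function.comp_assoc, hφcomm k, hχcomm k]⟩
    rw [e1, ← e2]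
    exact hχsurj.comp hφsurj
  · intro hEsat κ K iK hK C iC ε hCop P iP η hPcop χ hχhom hχcomm
    obtain ⟨P', iP', η', hP'cop⟩ :=
      coprodExists K (fun k => reduct T (K k) (iK k)) Ccl' hC'.2.1 hC'.2.2
    obtain ⟨φ, ⟨hφhom, hφcomm⟩, -⟩ := hP'cop.2.2 P iP (hsub _ _ hPcop.1) η hPcop.2.1
    have hφsurj : Function.Surjective φ :=
      coprod_surj hC.2.1 hPcop hφhom (fun k x => ⟨η' k x, congrFun (hφcomm k) x⟩)
    have hinj : Function.Injective (χ ∘ φ) :=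
      hEsat κ K iK hK C iC ε hCop P' iP' η' hP'cop (χ ∘ φ) (homOn_comp hφhom hχhom)
        (fun k => by rw [Function.comp_assoc, hφcomm k, hχcomm k])
    intro a b hab
    obtain ⟨a', rfl⟩ := hφsurj a
    obtain ⟨b', rfl⟩ := hφsurj b
    exact congrArg φ (hinj hab)

end CoproductsPaper
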